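/- (Steiner–Lehmus theorem, isosceles form.) Let A, B, C be three affinely independent points in a Euclidean space. Let D be a point in the open segment joining B and C with ∠BAD = ∠CAD, and let E be a point in the open segment joining A and C with ∠ABE = ∠CBE. If dist(A, D) = dist(B, E), then dist(A, C) = dist(B, C); that is, a triangle with two internal angle bisectors of equal length is isosceles. -/
import Mathlib


open EuclideanGeometry
open Real

section Aux

variable {V : Type*} [NormedAddCommGroup V] [InnerProductSpace ℝ V]
    {P : Type*} [MetricSpace P] [NormedAddTorsor V P]

/-- Law of sines (area form): the sine of the angle at a vertex times the product of the
two adjacent side lengths is the same for any two vertices of a triangle. -/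
private lemma law_sin_aux (p1 p2 p3 : P) :
    Real.sin (∠ p2 p1 p3) * (dist p2 p1 * dist p3 p1)
      = Real.sin (∠ p1 p2 p3) * (dist p1 p2 * dist p3 p2) := by
  rw [dist_eq_norm_vsub V p2 p1, dist_eq_norm_vsub V p3 p1, dist_eq_norm_vsub V p1 p2,
    dist_eq_norm_vsub V p3 p2]
  unfold EuclideanGeometry.angle
  rw [InnerProductGeometry.sin_angle_mul_norm_mul_norm,
    InnerProductGeometry.sin_angle_mul_norm_mul_norm]
  congr 1
  have h1 : (p1 -ᵥ p2 : V) = -(p2 -ᵥ p1) := (neg_vsub_eq_vsub_rev _ _).symm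
  have h3 : (p3 -ᵥ p2 : V) = (p3 -ᵥ p1) - (p2 -ᵥ p1) := (vsub_sub_vsub_cancel_right _ _ _).symm
  rw [h1, h3]
  simp only [inner_neg_neg, inner_neg_left, inner_neg_right, inner_sub_left, inner_sub_right]
  rw [real_inner_comm (p2 -ᵥ p1) (p3 -ᵥ p1)]
  ring

private lemma collinear_aux {A B C D : P} (hD : Sbtw ℝ B D C)
    (h : Collinear ℝ ({A, D, B} : Set P)) : Collinear ℝ ({A, B, C} : Set P) := by
  have hBDC : Collinear ℝ ({B, D, C} : Set P) := hD.wbtw.collinear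
  have h' : Collinear ℝ ({A, B, D} : Set P) := by
    have hset : ({A, B, D} : Set P) = {A, D, B} := by
      ext x; simp only [Set.mem_insert_iff, Set.mem_singleton_iff]; tauto
    rwa [hset]
  have hins : Collinear ℝ (insert A ({B, D, C} : Set P)) :=
    (hBDC.collinear_insert_iff_of_ne (by simp) (by simp)
      hD.ne_left.symm).mpr h'
  refine Collinear.subset ?_ hins
  intro x hx
  simp only [Set.mem_insert_iff, Set.mem_singleton_iff] at hx ⊢
  tauto

/-- Squared length of the internal angle bisector from `A` in triangle `ABC`. -/
private lemma bisector_sq {A B C D : P} (hABC : ¬ Collinear ℝ ({A, B, C} : Set P))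
    (hD : Sbtw ℝ B D C) (hAD : ∠ B A D = ∠ C A D) :
    dist A D ^ 2 * (dist A B + dist A C) ^ 2
      = dist A B * dist A C * ((dist A B + dist A C) ^ 2 - dist B C ^ 2) := by
  have hADne : A ≠ D := by
    rintro rfl
    exact hABC (by rw [Set.insert_comm]; exact hD.wbtw.collinear)
  have ht : dist A D ≠ 0 := dist_ne_zero.mpr hADne
  have hsδ : Real.sin (∠ A D B) ≠ 0 := by
    intro h0
    apply hABC
    apply collinear_aux hD
    rw [collinear_iff_eq_or_eq_or_angle_eq_zero_or_angle_eq_pi]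
    by_cases hpi : ∠ A D B = π
    · tauto
    · have hlt : ∠ A D B < π := lt_of_le_of_ne (angle_le_pi _ _ _) hpi
      have hge : -π < ∠ A D B := by
        have := angle_nonneg A D B
        have := Real.pi_pos
        linarith
      have := (Real.sin_eq_zero_iff_of_lt_of_lt hge hlt).mp h0
      tauto
  -- law of sines in the two subtriangles
  have los1 := law_sin_aux A D B
  have los2 := law_sin_aux A D C
  rw [dist_comm D A, dist_comm B A] at los1
  rw [dist_comm D A, dist_comm C A] at los2
  have hang : ∠ D A C = ∠ D A B := by
    rw [angle_comm D A C, angle_comm D A B, ← hAD]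
  have hsup : ∠ A D B + ∠ A D C = π :=
    angle_add_angle_eq_pi_of_angle_eq_pi A hD.angle₁₂₃_eq_pi
  have hsin : Real.sin (∠ A D C) = Real.sin (∠ A D B) := by
    rw [show ∠ A D C = π - ∠ A D B by linarith, Real.sin_pi_sub]
  rw [hang, hsin] at los2
  have h1 : Real.sin (∠ D A B) * dist A B = Real.sin (∠ A D B) * dist B D :=
    mul_left_cancel₀ ht (by linear_combination los1)
  have h2 : Real.sin (∠ D A B) * dist A C = Real.sin (∠ A D B) * dist C D :=
    mul_left_cancel₀ ht (by linear_combination los2)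
  have hratio : dist B D * dist A C = dist C D * dist A B :=
    mul_left_cancel₀ hsδ (by linear_combination dist A B * h2 - dist A C * h1)
  have hsum : dist B C = dist B D + dist C D :=
    dist_eq_add_dist_of_angle_eq_pi hD.angle₁₂₃_eq_pi
  have stewart := dist_sq_mul_dist_add_dist_sq_mul_dist A B C D hD.angle₁₂₃_eq_pi
  rw [hsum] at stewart
  have key : (dist B D + dist C D) *
      (dist A D ^ 2 * (dist A B + dist A C) ^ 2
        - dist A B * dist A C * ((dist A B + dist A C) ^ 2 - (dist B D + dist C D) ^ 2)) = 0 := by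
    linear_combination (dist A C ^ 3 + dist A C ^ 2 * dist A B - dist A C * dist A B ^ 2
      - dist A B ^ 3 + dist B D ^ 2 * dist A B + dist B D * dist C D * dist A B
      - dist B D * dist C D * dist A C - dist C D ^ 2 * dist A C) * hratio
      - (dist A B + dist A C) ^ 2 * stewart
  have hu : 0 < dist B D := dist_pos.mpr hD.ne_left.symm
  have hv : 0 ≤ dist C D := dist_nonneg
  rcases mul_eq_zero.mp key with h | h
  · linarith
  · rw [hsum]
    linarith

end Aux

/-- Steiner–Lehmus theorem, isosceles form: a triangle with two internal angle
bisectors of equal length is isosceles. -/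
theorem steinerLehmus_isosceles {V : Type*} [NormedAddCommGroup V] [InnerProductSpace ℝ V]
    {P : Type*} [MetricSpace P] [NormedAddTorsor V P]
    {A B C D E : P}
    (hABC : AffineIndependent ℝ ![A, B, C])
    (hD : Sbtw ℝ B D C)
    (hAD : ∠ B A D = ∠ C A D)
    (hE : Sbtw ℝ A E C)
    (hBE : ∠ A B E = ∠ C B E)
    (hlen : dist A D = dist B E) :
    dist A C = dist B C := by
  have hnc : ¬ Collinear ℝ ({A, B, C} : Set P) :=
    affineIndependent_iff_not_collinear_set.mp hABC
  have hnc' : ¬ Collinear ℝ ({B, A, C} : Set P) := by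
    rwa [Set.insert_comm]
  have eq1 := bisector_sq hnc hD hAD
  have eq2 := bisector_sq hnc' hE hBE
  rw [dist_comm B A, ← hlen] at eq2
  have hAB : A ≠ B := by
    rintro rfl
    exact hnc (by simpa using collinear_pair ℝ A C)
  have hAC : A ≠ C := by
    rintro rfl
    exact hnc (by rw [Set.insert_comm]; simpa using collinear_pair ℝ B A)
  have hBC : B ≠ C := by
    rintro rfl
    exact hnc (by simpa using collinear_pair ℝ A B)
  have ha : 0 < dist B C := dist_pos.mpr hBC
  have hb : 0 < dist A C := dist_pos.mpr hAC
  have hc : 0 < dist A B := dist_pos.mpr hAB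
  set a := dist B C
  set b := dist A C
  set c := dist A B
  have hg : (b - a) * (c * (c ^ 4 + 2 * b * c ^ 3 + b ^ 2 * c ^ 2 + 2 * a * c ^ 3
      + 5 * a * b * c ^ 2 + 4 * a * b ^ 2 * c + a * b ^ 3 + a ^ 2 * c ^ 2
      + 4 * a ^ 2 * b * c + 2 * a ^ 2 * b ^ 2 + a ^ 3 * b)) = 0 := by
    linear_combination (c + b) ^ 2 * eq2 - (c + a) ^ 2 * eq1
  have hH : 0 < c * (c ^ 4 + 2 * b * c ^ 3 + b ^ 2 * c ^ 2 + 2 * a * c ^ 3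
      + 5 * a * b * c ^ 2 + 4 * a * b ^ 2 * c + a * b ^ 3 + a ^ 2 * c ^ 2
      + 4 * a ^ 2 * b * c + 2 * a ^ 2 * b ^ 2 + a ^ 3 * b) := by positivity
  rcases mul_eq_zero.mp hg with h | h
  · linarith
  · linarith
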